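/- Let ρ be the qubit density matrix with Bloch parameters (n, θ, φ), where 0 ≤ n ≤ 1, 0 ≤ θ ≤ π/2, and assume (n, θ) ≠ (1, 0). Let θ_o = arccos(n cos θ), and define χ₁ = (cos(θ_o/2), e^{iφ} sin(θ_o/2))ᵀ, χ₂ = (cos(θ_o/2), −e^{iφ} sin(θ_o/2))ᵀ, p₁ = (1 + n sin θ / sin θ_o)/2, p₂ = (1 − n sin θ / sin θ_o)/2. Then 0 ≤ p₂ ≤ p₁ ≤ 1, p₁ + p₂ = 1, ρ = p₁ χ₁χ₁* + p₂ χ₂χ₂*, and |χ_k(0)|² = ρ₀₀ = cos²(θ_o/2) for k = 1, 2; hence for every symmetric concave f on Ω₂ this decomposition D^(M) attains the maximal average coherence f(cos²(θ_o/2), sin²(θ_o/2)) = f(ρ₀₀, ρ₁₁). (The optimal decomposition D^(M).) -/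

import Mathlib

open Matrix BigOperators
open scoped ComplexOrder

noncomputable section

/-- A symmetric function: invariant under all coordinate permutations. -/
def SymmetricFn {n : ℕ} (f : (Fin n → ℝ) → ℝ) : Prop :=
  ∀ (σ : Equiv.Perm (Fin n)) (x : Fin n → ℝ), f (x ∘ σ) = f x

/-- A density matrix: positive semidefinite with trace one. -/
def IsDensityMatrix {n : ℕ} (ρ : Matrix (Fin n) (Fin n) ℂ) : Prop :=
  ρ.PosSemidef ∧ ρ.trace = 1

/-- The rank-one projection `ψ ψ*` associated to a vector `ψ ∈ ℂⁿ`. -/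
def outer {n : ℕ} (ψ : Fin n → ℂ) : Matrix (Fin n) (Fin n) ℂ :=
  Matrix.vecMulVec ψ (fun i => starRingEnd ℂ (ψ i))

/-- `(p, ψ)` is a pure state decomposition of `ρ`. -/
def IsDecomposition {n m : ℕ} (ρ : Matrix (Fin n) (Fin n) ℂ)
    (p : Fin m → ℝ) (ψ : Fin m → Fin n → ℂ) : Prop :=
  (∀ k, 0 ≤ p k) ∧ (∑ k, p k = 1) ∧ (∀ k, ∑ i, ‖ψ k i‖ ^ 2 = 1) ∧
    ρ = ∑ k, (p k : ℂ) • outer (ψ k)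

/-- The coherence vector `(|ψ₀|², …, |ψ_{n-1}|²)` of a vector `ψ`. -/
def cohVec {n : ℕ} (ψ : Fin n → ℂ) : Fin n → ℝ := fun i => ‖ψ i‖ ^ 2

/-- The average coherence of a pure state decomposition with respect to `f`. -/
def avgCoh {n m : ℕ} (f : (Fin n → ℝ) → ℝ) (p : Fin m → ℝ)
    (ψ : Fin m → Fin n → ℂ) : ℝ :=
  ∑ k, p k * f (cohVec (ψ k))


/-- The Pauli matrices. -/
def pauli1 : Matrix (Fin 2) (Fin 2) ℂ := !![0, 1; 1, 0]
def pauli2 : Matrix (Fin 2) (Fin 2) ℂ := !![0, -Complex.I; Complex.I, 0]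
def pauli3 : Matrix (Fin 2) (Fin 2) ℂ := !![1, 0; 0, -1]

/-- The qubit density matrix with Bloch parameters `(r, θ, φ)`:
`ρ = (1/2)(I + r sinθ cosφ σ₁ + r sinθ sinφ σ₂ + r cosθ σ₃)`. -/
def bloch (r θ φ : ℝ) : Matrix (Fin 2) (Fin 2) ℂ :=
  (1 / 2 : ℂ) • ((1 : Matrix (Fin 2) (Fin 2) ℂ)
    + (r * Real.sin θ * Real.cos φ) • pauli1
    + (r * Real.sin θ * Real.sin φ) • pauli2
    + (r * Real.cos θ) • pauli3)

/-! For concave `f`, Jensen's inequality bounds the average coherence of any pure state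
decomposition of `ρ` by `f` of the average coherence vector, and that average is always the
diagonal `(ρ₀₀, ρ₁₁)`. Equality holds as soon as every state of the decomposition has the diagonal
of `ρ` as its coherence vector. `χ₁` and `χ₂` differ only in the sign of their second coordinate,
so mixing them keeps the diagonal `(cos²(θ_o/2), sin²(θ_o/2)) = ((1 + n cos θ)/2, (1 - n cos θ)/2)`
and scales the off-diagonal entry by `p₁ - p₂ = n sin θ / sin θ_o`; since
`2 sin(θ_o/2) cos(θ_o/2) = sin θ_o`, this is the off-diagonal entry of `ρ`. -/

theorem cohVec_mem_stdSimplex {n : ℕ} {ψ : Fin n → ℂ} (hψ : ∑ i, ‖ψ i‖ ^ 2 = 1) :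
    cohVec ψ ∈ stdSimplex ℝ (Fin n) :=
  ⟨fun i => sq_nonneg ‖ψ i‖, hψ⟩

theorem outer_apply_self_re {n : ℕ} (ψ : Fin n → ℂ) (i : Fin n) :
    (outer ψ i i).re = cohVec ψ i := by
  simp [outer, cohVec, Matrix.vecMulVec_apply, Complex.mul_conj', ← Complex.ofReal_pow]

namespace IsDecomposition

variable {n m : ℕ} {ρ : Matrix (Fin n) (Fin n) ℂ} {p : Fin m → ℝ} {ψ : Fin m → Fin n → ℂ}

theorem sum_smul_cohVec (h : IsDecomposition ρ p ψ) :
    ∑ k, p k • cohVec (ψ k) = fun i => (ρ i i).re := by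
  funext i
  simp [h.2.2.2, Matrix.sum_apply, Complex.re_sum, outer_apply_self_re]

theorem avgCoh_le (h : IsDecomposition ρ p ψ) {f : (Fin n → ℝ) → ℝ}
    (hf : ConcaveOn ℝ (stdSimplex ℝ (Fin n)) f) :
    avgCoh f p ψ ≤ f fun i => (ρ i i).re := by
  rw [← h.sum_smul_cohVec]
  exact hf.le_map_sum (fun k _ => h.1 k) h.2.1 fun k _ => cohVec_mem_stdSimplex (h.2.2.1 k)

theorem isGreatest_avgCoh (h : IsDecomposition ρ p ψ)
    (hψ : ∀ k, cohVec (ψ k) = fun i => (ρ i i).re)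
    {f : (Fin n → ℝ) → ℝ} (hf : ConcaveOn ℝ (stdSimplex ℝ (Fin n)) f) :
    IsGreatest {c : ℝ | ∃ (m : ℕ) (p : Fin m → ℝ) (ψ : Fin m → Fin n → ℂ),
        IsDecomposition ρ p ψ ∧ c = avgCoh f p ψ} (f fun i => (ρ i i).re) := by
  refine ⟨⟨m, p, ψ, h, ?_⟩, ?_⟩
  · simp [avgCoh, hψ, ← Finset.sum_mul, h.2.1]
  · rintro c ⟨m', p', ψ', h', rfl⟩
    exact h'.avgCoh_le hf

theorem pair {p q : ℝ} {ψ χ : Fin n → ℂ} (hp : 0 ≤ p) (hq : 0 ≤ q) (hpq : p + q = 1)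
    (hψ : ∑ i, ‖ψ i‖ ^ 2 = 1) (hχ : ∑ i, ‖χ i‖ ^ 2 = 1)
    (hρ : ρ = (p : ℂ) • outer ψ + (q : ℂ) • outer χ) :
    IsDecomposition ρ ![p, q] ![ψ, χ] := by
  refine ⟨fun k => ?_, by simpa using hpq, fun k => ?_, by simpa using hρ⟩ <;>
    fin_cases k <;> assumption

end IsDecomposition

open Real ComplexConjugate

theorem cos_sq_half (t : ℝ) : cos (t / 2) ^ 2 = (1 + cos t) / 2 := by
  rw [cos_sq, show 2 * (t / 2) = t by ring]; ring

theorem sin_sq_half (t : ℝ) : sin (t / 2) ^ 2 = (1 - cos t) / 2 := by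
  rw [sin_sq, cos_sq_half]; ring

theorem sin_arccos_pos {x : ℝ} (h₁ : -1 < x) (h₂ : x < 1) : 0 < sin (arccos x) :=
  sin_pos_of_pos_of_lt_pi (arccos_pos.2 h₂) (arccos_lt_pi.2 h₁)

theorem abs_mul_sin_le_sin_arccos {r : ℝ} (hr : |r| ≤ 1) (θ : ℝ) :
    |r * sin θ| ≤ sin (arccos (r * cos θ)) := by
  rw [sin_arccos]
  refine abs_le_sqrt ?_
  have hr2 : r ^ 2 ≤ 1 := by nlinarith [abs_nonneg r, sq_abs r]
  nlinarith [sin_sq_add_cos_sq θ, sq_nonneg (sin θ)]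

theorem mul_cos_mem_Ico {r θ : ℝ} (hr₀ : 0 ≤ r) (hr₁ : r ≤ 1) (hθ₀ : 0 ≤ θ) (hθ₁ : θ ≤ π / 2)
    (hne : ¬(r = 1 ∧ θ = 0)) : r * cos θ ∈ Set.Ico 0 1 := by
  refine ⟨mul_nonneg hr₀ (cos_nonneg_of_mem_Icc ⟨by linarith [pi_pos], hθ₁⟩), ?_⟩
  rcases hr₁.lt_or_eq with hr | rfl
  · nlinarith [cos_le_one θ]
  · have hθ : 0 < θ := hθ₀.lt_of_ne fun h => hne ⟨rfl, h.symm⟩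
    simpa using cos_lt_cos_of_nonneg_of_le_pi_div_two le_rfl hθ₁ hθ

theorem mul_sin_div_sin_arccos_mem_Icc {r θ : ℝ} (hr₀ : 0 ≤ r) (hr₁ : r ≤ 1) (hθ₀ : 0 ≤ θ)
    (hθ₁ : θ ≤ π) (hsin : 0 < sin (arccos (r * cos θ))) :
    r * sin θ / sin (arccos (r * cos θ)) ∈ Set.Icc 0 1 :=
  ⟨div_nonneg (mul_nonneg hr₀ (sin_nonneg_of_nonneg_of_le_pi hθ₀ hθ₁)) hsin.le,
    (div_le_one hsin).2 <|
      (le_abs_self _).trans (abs_mul_sin_le_sin_arccos (abs_le.2 ⟨by linarith, hr₁⟩) θ)⟩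

open Complex in
theorem smul_outer_add_smul_outer_neg (p q : ℝ) (a b : ℂ) :
    (p : ℂ) • outer ![a, b] + (q : ℂ) • outer ![a, -b] =
      !![(p + q : ℂ) * (a * conj a), (p - q : ℂ) * (a * conj b);
        (p - q : ℂ) * (b * conj a), (p + q : ℂ) * (b * conj b)] := by
  ext i j
  fin_cases i <;> fin_cases j <;>
    simp [outer, Matrix.vecMulVec_apply, -Matrix.cons_vecMulVec] <;> ring

open Complex in
theorem bloch_eq (r θ φ : ℝ) :
    bloch r θ φ =
      !![(((1 + r * Real.cos θ) / 2 : ℝ) : ℂ), ((r * Real.sin θ / 2 : ℝ) : ℂ) * conj (exp (I * φ));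
        ((r * Real.sin θ / 2 : ℝ) : ℂ) * exp (I * φ), (((1 - r * Real.cos θ) / 2 : ℝ) : ℂ)] := by
  rw [mul_comm I, exp_mul_I]
  ext i j
  fin_cases i <;> fin_cases j <;>
    simp [bloch, pauli1, pauli2, pauli3, ← ofReal_cos, ← ofReal_sin] <;> ring

open Complex in
theorem bloch_eq_smul_outer_add_smul_outer_neg {r θ φ t p q : ℝ} (hpq : p + q = 1)
    (hcos : Real.cos t = r * Real.cos θ) (hsin : (p - q) * Real.sin t = r * Real.sin θ) :
    bloch r θ φ =
      (p : ℂ) • outer ![(Real.cos (t / 2) : ℂ), exp (I * φ) * (Real.sin (t / 2) : ℂ)] +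
        (q : ℂ) • outer ![(Real.cos (t / 2) : ℂ), -(exp (I * φ) * (Real.sin (t / 2) : ℂ))] := by
  have hdiag₀ : (p + q) * Real.cos (t / 2) ^ 2 = (1 + r * Real.cos θ) / 2 := by
    rw [hpq, one_mul, cos_sq_half, hcos]
  have hdiag₁ : (p + q) * Real.sin (t / 2) ^ 2 = (1 - r * Real.cos θ) / 2 := by
    rw [hpq, one_mul, sin_sq_half, hcos]
  have hoff : (p - q) * (Real.cos (t / 2) * Real.sin (t / 2)) = r * Real.sin θ / 2 := by
    have h2 : Real.sin t = 2 * Real.sin (t / 2) * Real.cos (t / 2) := by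
      rw [← Real.sin_two_mul]; ring_nf
    rw [← hsin, h2]; ring
  have hunit : exp (I * φ) * conj (exp (I * φ)) = 1 := by
    rw [mul_conj', norm_exp_I_mul_ofReal]; norm_num
  rw [smul_outer_add_smul_outer_neg, bloch_eq]
  ext i j
  fin_cases i <;> fin_cases j <;> simp [map_mul, -ofReal_cos, -ofReal_sin] <;> norm_cast
  · linear_combination (norm := skip) -congrArg ((↑) : ℝ → ℂ) hdiag₀
    push_cast; ring
  · linear_combination (norm := skip) -conj (exp (I * φ)) * congrArg ((↑) : ℝ → ℂ) hoff
    push_cast; ring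
  · linear_combination (norm := skip) -exp (I * φ) * congrArg ((↑) : ℝ → ℂ) hoff
    push_cast; ring
  · linear_combination (norm := skip) -congrArg ((↑) : ℝ → ℂ) hdiag₁ -
      ((p + q) * Real.sin (t / 2) ^ 2 : ℂ) * hunit
    push_cast; ring

theorem bloch_diag_re {r θ φ t : ℝ} (hcos : cos t = r * cos θ) :
    (fun i => (bloch r θ φ i i).re) = ![cos (t / 2) ^ 2, sin (t / 2) ^ 2] := by
  funext i
  fin_cases i <;> simp [bloch_eq, cos_sq_half, sin_sq_half, hcos, -Complex.ofReal_cos]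

theorem cohVec_ofReal_unit_mul (a b : ℝ) {u : ℂ} (hu : ‖u‖ = 1) :
    cohVec ![(a : ℂ), u * b] = ![a ^ 2, b ^ 2] := by
  funext i
  fin_cases i <;> simp [cohVec, hu]

/-- The optimal decomposition `D^(M)` of a qubit state with Bloch parameters
`(n, θ, φ)`, `0 ≤ n ≤ 1`, `0 ≤ θ ≤ π/2`, `(n, θ) ≠ (1, 0)`: with
`θ_o = arccos(n cos θ)`, the states `χ₁ = (cos(θ_o/2), e^{iφ} sin(θ_o/2))`,
`χ₂ = (cos(θ_o/2), −e^{iφ} sin(θ_o/2))` with weights `(1 ± n sinθ/sin θ_o)/2`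
decompose `ρ`, share its diagonal, and attain the maximal average coherence
`f(cos²(θ_o/2), sin²(θ_o/2)) = f(ρ₀₀, ρ₁₁)` for every symmetric concave `f`. -/
theorem optimal_decomposition_DM (n θ φ : ℝ)
    (hn0 : 0 ≤ n) (hn1 : n ≤ 1) (hθ0 : 0 ≤ θ) (hθ1 : θ ≤ Real.pi / 2)
    (hne : ¬(n = 1 ∧ θ = 0)) :
    let ρ := bloch n θ φ
    let θo := Real.arccos (n * Real.cos θ)
    let χ₁ : Fin 2 → ℂ :=
      ![(Real.cos (θo / 2) : ℂ),
        Complex.exp (Complex.I * φ) * (Real.sin (θo / 2) : ℂ)]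
    let χ₂ : Fin 2 → ℂ :=
      ![(Real.cos (θo / 2) : ℂ),
        -(Complex.exp (Complex.I * φ) * (Real.sin (θo / 2) : ℂ))]
    let p₁ : ℝ := (1 + n * Real.sin θ / Real.sin θo) / 2
    let p₂ : ℝ := (1 - n * Real.sin θ / Real.sin θo) / 2
    (0 ≤ p₂ ∧ p₂ ≤ p₁ ∧ p₁ ≤ 1) ∧ p₁ + p₂ = 1 ∧
    ρ = (p₁ : ℂ) • outer χ₁ + (p₂ : ℂ) • outer χ₂ ∧
    (‖χ₁ 0‖ ^ 2 = (ρ 0 0).re ∧ ‖χ₂ 0‖ ^ 2 = (ρ 0 0).re ∧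
      (ρ 0 0).re = Real.cos (θo / 2) ^ 2) ∧
    ∀ f : (Fin 2 → ℝ) → ℝ, SymmetricFn f → ConcaveOn ℝ (stdSimplex ℝ (Fin 2)) f →
      p₁ * f (cohVec χ₁) + p₂ * f (cohVec χ₂) =
        f ![Real.cos (θo / 2) ^ 2, Real.sin (θo / 2) ^ 2] ∧
      f ![Real.cos (θo / 2) ^ 2, Real.sin (θo / 2) ^ 2] = f (fun i => (ρ i i).re) ∧
      IsGreatest {c : ℝ | ∃ (m : ℕ) (p : Fin m → ℝ) (ψ : Fin m → Fin 2 → ℂ),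
          IsDecomposition ρ p ψ ∧ c = avgCoh f p ψ}
        (f ![Real.cos (θo / 2) ^ 2, Real.sin (θo / 2) ^ 2]) := by
  intro ρ θo χ₁ χ₂ p₁ p₂
  obtain ⟨hc₀, hc₁⟩ := mul_cos_mem_Ico hn0 hn1 hθ0 hθ1 hne
  have hcos : cos θo = n * cos θ := cos_arccos (by linarith) hc₁.le
  have hsin_pos : 0 < sin θo := sin_arccos_pos (by linarith) hc₁
  obtain ⟨hratio₀, hratio₁⟩ :=
    mul_sin_div_sin_arccos_mem_Icc hn0 hn1 hθ0 (by linarith [pi_pos]) hsin_pos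
  have hp : 0 ≤ p₂ ∧ p₂ ≤ p₁ ∧ p₁ ≤ 1 := by
    refine ⟨?_, ?_, ?_⟩ <;> simp only [p₁, p₂] <;> linarith
  have hpq : p₁ + p₂ = 1 := by ring
  have hdecomp : ρ = (p₁ : ℂ) • outer χ₁ + (p₂ : ℂ) • outer χ₂ :=
    bloch_eq_smul_outer_add_smul_outer_neg hpq hcos (by simp only [p₁, p₂]; field_simp; ring)
  have hdiag : (fun i => (ρ i i).re) = ![cos (θo / 2) ^ 2, sin (θo / 2) ^ 2] := bloch_diag_re hcos
  have hunit := Complex.norm_exp_I_mul_ofReal φ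
  have hχ₁ : cohVec χ₁ = fun i => (ρ i i).re := hdiag ▸ cohVec_ofReal_unit_mul _ _ hunit
  have hχ₂ : cohVec χ₂ = fun i => (ρ i i).re := by
    rw [hdiag, ← cohVec_ofReal_unit_mul _ _ ((norm_neg _).trans hunit)]
    simp only [χ₂, neg_mul]
  have hnorm : ∀ χ, cohVec χ = (fun i => (ρ i i).re) → ∑ i, ‖χ i‖ ^ 2 = 1 := fun χ h => by
    change ∑ i, cohVec χ i = 1
    rw [h, hdiag]
    simp
  have hD : IsDecomposition ρ ![p₁, p₂] ![χ₁, χ₂] :=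
    .pair (hp.1.trans hp.2.1) hp.1 hpq (hnorm _ hχ₁) (hnorm _ hχ₂) hdecomp
  refine ⟨hp, hpq, hdecomp, ⟨congrFun hχ₁ 0, congrFun hχ₂ 0, congrFun hdiag 0⟩,
    fun f _ hf => ⟨?_, by rw [hdiag], ?_⟩⟩
  · rw [hχ₁, hχ₂, ← add_mul, hpq, one_mul, hdiag]
  · rw [← hdiag]
    exact hD.isGreatest_avgCoh (fun k => by fin_cases k <;> assumption) hf
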